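/- arXiv:2503.15824 — 5 statements merged into one kernel-verified Lean document; each statement's English description precedes it below -/
import Mathlib

section
/- Let q ∈ M(μ,σ). Then (μ_F − μ)² + (σ_F − σ)² ≤ d²(q_F, q) ≤ (μ_F − μ)² + (σ_F − σ)² + 2σσ_F; that is, ε_min ≤ d²(q_F, q) ≤ ε_min + 2σσ_F. In particular, if ε < ε_min then M_ε(μ,σ) := { q ∈ M(μ,σ) : d²(q_F, q) ≤ ε } is empty. -/
/-!
Over the uniform law on `(0,1)`, `d²(q_F, q) = (μ_F - μ)² + σ_F² + σ² - 2 Cov(q_F, q)`.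
The lower bound is Cauchy–Schwarz, `Cov(q_F, q) ≤ σ_F σ`; the upper bound is Chebyshev's
integral inequality, `Cov(q_F, q) ≥ 0` for the two nondecreasing functions `q_F` and `q`.
-/

open MeasureTheory Set Filter

noncomputable section

/-- Integral over the interval (0,1) with Lebesgue measure. -/
def intI (f : ℝ → ℝ) : ℝ := ∫ u in Ioo (0:ℝ) 1, f u

/-- Square integrability on (0,1). -/
def SqInt (f : ℝ → ℝ) : Prop :=
  IntegrableOn f (Ioo (0:ℝ) 1) volume ∧ IntegrableOn (fun u => f u ^ 2) (Ioo (0:ℝ) 1) volume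

/-- A quantile function: nondecreasing and square-integrable on (0,1). -/
def IsQuantile (q : ℝ → ℝ) : Prop := MonotoneOn q (Ioo (0:ℝ) 1) ∧ SqInt q

/-- Membership in `M(μ,σ)` : quantile function with prescribed first two moments. -/
def MemM (μ σ : ℝ) (q : ℝ → ℝ) : Prop :=
  IsQuantile q ∧ intI q = μ ∧ intI (fun u => q u ^ 2) = μ ^ 2 + σ ^ 2

/-- Squared Wasserstein distance between (quantile) functions on (0,1). -/
def W2 (p q : ℝ → ℝ) : ℝ := intI (fun u => (p u - q u) ^ 2)

/-- Almost-everywhere equality on (0,1). -/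
def AeEqI (f g : ℝ → ℝ) : Prop := f =ᵐ[(volume : Measure ℝ).restrict (Ioo (0:ℝ) 1)] g

/-- The penalized objective `J_δ(q) = ∫ γ q − δ d²(q_F, q)`. -/
def Jpen (γ qF : ℝ → ℝ) (δ : ℝ) (q : ℝ → ℝ) : ℝ :=
  intI (fun u => γ u * q u) - δ * W2 qF q

namespace ProbabilityTheory

variable {Ω : Type*} {mΩ : MeasurableSpace Ω} {P : Measure Ω} [IsProbabilityMeasure P]
  {X Y : Ω → ℝ}

lemma covariance_sq_le_variance_mul (hX : MemLp X 2 P) (hY : MemLp Y 2 P) :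
    cov[X, Y; P] ^ 2 ≤ Var[X; P] * Var[Y; P] := by
  have hquad : ∀ t : ℝ, 0 ≤ Var[Y; P] * (t * t) + (-2 * cov[X, Y; P]) * t + Var[X; P] := by
    intro t
    have h := variance_nonneg (X - t • Y) P
    rw [variance_sub hX (hY.const_smul t), covariance_smul_right, variance_smul] at h
    linarith
  have hdisc := discrim_le_zero hquad
  rw [discrim] at hdisc
  linarith

lemma integral_sub_sq (hX : MemLp X 2 P) (hY : MemLp Y 2 P) :
    ∫ ω, (X ω - Y ω) ^ 2 ∂P =
      (P[X] - P[Y]) ^ 2 + Var[X; P] + Var[Y; P] - 2 * cov[X, Y; P] := by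
  have h := variance_eq_sub (hX.sub hY)
  simp only [Pi.pow_apply, Pi.sub_apply] at h
  rw [variance_sub hX hY, integral_sub (hX.integrable one_le_two) (hY.integrable one_le_two)] at h
  linarith

lemma integral_prod_sub_mul_sub (hX : MemLp X 2 P) (hY : MemLp Y 2 P) :
    ∫ z, (X z.1 - X z.2) * (Y z.1 - Y z.2) ∂(P.prod P) = 2 * cov[X, Y; P] := by
  have hXi := hX.integrable one_le_two
  have hYi := hY.integrable one_le_two
  have hXY : Integrable (fun ω ↦ X ω * Y ω) P := hX.integrable_mul hY
  have hA : Integrable (fun z : Ω × Ω ↦ X z.1 * Y z.1) (P.prod P) := hXY.comp_fst P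
  have hB : Integrable (fun z : Ω × Ω ↦ X z.2 * Y z.2) (P.prod P) := hXY.comp_snd P
  have hC : Integrable (fun z : Ω × Ω ↦ X z.1 * Y z.2) (P.prod P) := hXi.mul_prod hYi
  have hD : Integrable (fun z : Ω × Ω ↦ Y z.1 * X z.2) (P.prod P) := hYi.mul_prod hXi
  have expand : ∀ z : Ω × Ω, (X z.1 - X z.2) * (Y z.1 - Y z.2) =
      X z.1 * Y z.1 + X z.2 * Y z.2 - X z.1 * Y z.2 - Y z.1 * X z.2 := fun z ↦ by ring
  simp_rw [expand]
  rw [integral_sub ?_ hD, integral_sub ?_ hC, integral_add hA hB]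
  · rw [integral_fun_fst (fun ω ↦ X ω * Y ω), integral_fun_snd (fun ω ↦ X ω * Y ω),
      integral_prod_mul X Y, integral_prod_mul Y X, covariance_eq_sub hX hY]
    simp only [probReal_univ, one_smul, Pi.mul_apply]
    ring
  · exact hA.add hB
  · exact (hA.add hB).sub hC

lemma covariance_nonneg_of_monotoneOn [LinearOrder Ω] {s : Set Ω} (hs : ∀ᵐ ω ∂P, ω ∈ s)
    (hXm : MonotoneOn X s) (hYm : MonotoneOn Y s) (hX : MemLp X 2 P) (hY : MemLp Y 2 P) :
    0 ≤ cov[X, Y; P] := by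
  have hs_prod : ∀ᵐ z ∂(P.prod P), z.1 ∈ s ∧ z.2 ∈ s :=
    (Measure.quasiMeasurePreserving_fst.ae hs).and (Measure.quasiMeasurePreserving_snd.ae hs)
  have hsym : 0 ≤ ∫ z, (X z.1 - X z.2) * (Y z.1 - Y z.2) ∂(P.prod P) := by
    refine integral_nonneg_of_ae (hs_prod.mono fun z ⟨h1, h2⟩ ↦ ?_)
    rcases le_total z.1 z.2 with h | h
    · exact mul_nonneg_of_nonpos_of_nonpos (sub_nonpos.2 (hXm h1 h2 h))
        (sub_nonpos.2 (hYm h1 h2 h))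
    · exact mul_nonneg (sub_nonneg.2 (hXm h2 h1 h)) (sub_nonneg.2 (hYm h2 h1 h))
  rw [integral_prod_sub_mul_sub hX hY] at hsym
  linarith

end ProbabilityTheory

open ProbabilityTheory

instance : IsProbabilityMeasure (volume.restrict (Ioo (0 : ℝ) 1)) :=
  ⟨by simp [Real.volume_Ioo]⟩

local notation "ν" => volume.restrict (Ioo (0 : ℝ) 1)

lemma SqInt.memLp_two {f : ℝ → ℝ} (hf : SqInt f) : MemLp f 2 ν :=
  (memLp_two_iff_integrable_sq hf.1.aestronglyMeasurable).2 hf.2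

lemma MemM.variance_eq {μ σ : ℝ} {q : ℝ → ℝ} (hq : MemM μ σ q) : Var[q; ν] = σ ^ 2 := by
  obtain ⟨⟨-, hsq⟩, hmean, hmom⟩ := hq
  rw [variance_eq_sub hsq.memLp_two]
  simp only [intI] at hmean hmom
  simp only [Pi.pow_apply, hmean, hmom]
  ring

lemma W2_eq_of_memM {μp σp μ σ : ℝ} {p q : ℝ → ℝ} (hp : MemM μp σp p) (hq : MemM μ σ q) :
    W2 p q = (μp - μ) ^ 2 + σp ^ 2 + σ ^ 2 - 2 * cov[p, q; ν] := by
  have hpm : ν[p] = μp := hp.2.1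
  have hqm : ν[q] = μ := hq.2.1
  rw [W2, intI, integral_sub_sq hp.1.2.memLp_two hq.1.2.memLp_two, hp.variance_eq,
    hq.variance_eq, hpm, hqm]

theorem statement0
    (μ μF σ σF : ℝ) (hσpos : 0 < σ) (hσFpos : 0 < σF)
    (qF : ℝ → ℝ) (hqF : IsQuantile qF)
    (hqFm : intI qF = μF) (hqF2 : intI (fun u => qF u ^ 2) = μF ^ 2 + σF ^ 2)
    (εmin : ℝ) (hεmin : εmin = (μF - μ) ^ 2 + (σF - σ) ^ 2) :
    (∀ q : ℝ → ℝ, MemM μ σ q →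
        εmin ≤ W2 qF q ∧ W2 qF q ≤ εmin + 2 * σ * σF) ∧
    ∀ ε : ℝ, ε < εmin → {q : ℝ → ℝ | MemM μ σ q ∧ W2 qF q ≤ ε} = ∅ := by
  have hF : MemM μF σF qF := ⟨hqF, hqFm, hqF2⟩
  have bounds : ∀ q : ℝ → ℝ, MemM μ σ q →
      εmin ≤ W2 qF q ∧ W2 qF q ≤ εmin + 2 * σ * σF := by
    intro q hq
    have hcs : cov[qF, q; ν] ≤ σF * σ := by
      refine (abs_le_of_sq_le_sq' ?_ (by positivity)).2
      rw [mul_pow, ← hF.variance_eq, ← hq.variance_eq]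
      exact covariance_sq_le_variance_mul hqF.2.memLp_two hq.1.2.memLp_two
    have hcheb : 0 ≤ cov[qF, q; ν] :=
      covariance_nonneg_of_monotoneOn (ae_restrict_mem measurableSet_Ioo) hqF.1 hq.1.1
        hqF.2.memLp_two hq.1.2.memLp_two
    rw [W2_eq_of_memM hF hq, hεmin]
    constructor <;> nlinarith
  exact ⟨bounds, fun ε hε ↦ eq_empty_of_forall_notMem fun q ⟨hq, hle⟩ ↦ by
    linarith [(bounds q hq).1]⟩
end
end

section
/- (Corollary 3.1) sup_{q ∈ M(μ,σ)} ∫ γ q = μ + σσ₀, and the supremum is attained uniquely (up to a.e. equality) at the quantile function q(u) = μ + (σ/σ₀)(γ(u) − 1). -/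
/-! With `X = γ - 1` and `Y = q - μ`, the variance of `σ X - σ₀ Y` equals
`2 σ σ₀ (σ σ₀ - Cov(γ, q))`, while `∫ γ q = μ + Cov(γ, q)`. Nonnegativity of the variance gives
the bound, and equality forces `σ X - σ₀ Y` to be a.e. constant, i.e. `q = μ + (σ/σ₀)(γ - 1)`
a.e. -/

open MeasureTheory Set Filter

noncomputable section

namespace ProbabilityTheory

variable {Ω : Type*} {mΩ : MeasurableSpace Ω} {μ : Measure Ω} {X Y : Ω → ℝ} {a b : ℝ}

lemma variance_fun_mul_sub_mul_of_variance_eq_sq [IsFiniteMeasure μ] (hX : MemLp X 2 μ)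
    (hY : MemLp Y 2 μ) (hXa : Var[X; μ] = a ^ 2) (hYb : Var[Y; μ] = b ^ 2) :
    Var[fun ω ↦ b * X ω - a * Y ω; μ] = 2 * a * b * (a * b - cov[X, Y; μ]) := by
  rw [variance_fun_sub (hX.const_mul b) (hY.const_mul a), variance_const_mul, variance_const_mul,
    covariance_const_mul_left, covariance_const_mul_right, hXa, hYb]
  ring

lemma covariance_le_mul_of_variance_eq_sq [IsFiniteMeasure μ] (hX : MemLp X 2 μ)
    (hY : MemLp Y 2 μ) (ha : 0 < a) (hb : 0 < b) (hXa : Var[X; μ] = a ^ 2)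
    (hYb : Var[Y; μ] = b ^ 2) :
    cov[X, Y; μ] ≤ a * b := by
  have h := variance_nonneg (fun ω ↦ b * X ω - a * Y ω) μ
  rw [variance_fun_mul_sub_mul_of_variance_eq_sq hX hY hXa hYb] at h
  nlinarith [mul_pos ha hb]

lemma covariance_eq_mul_iff_of_variance_eq_sq [IsProbabilityMeasure μ] (hX : MemLp X 2 μ)
    (hY : MemLp Y 2 μ) (ha : 0 < a) (hb : 0 < b) (hXa : Var[X; μ] = a ^ 2)
    (hYb : Var[Y; μ] = b ^ 2) :
    cov[X, Y; μ] = a * b ↔ Y =ᵐ[μ] fun ω ↦ μ[Y] + b / a * (X ω - μ[X]) := by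
  have hZ : MemLp (fun ω ↦ b * X ω - a * Y ω) 2 μ := (hX.const_mul b).sub (hY.const_mul a)
  have hab : 2 * a * b ≠ 0 := by positivity
  have hvar : cov[X, Y; μ] = a * b ↔ Var[fun ω ↦ b * X ω - a * Y ω; μ] = 0 := by
    rw [variance_fun_mul_sub_mul_of_variance_eq_sq hX hY hXa hYb, mul_eq_zero, sub_eq_zero,
      eq_comm]
    simp [hab]
  rw [hvar]
  constructor
  · intro h
    filter_upwards [ae_eq_integral_of_variance_eq_zero hZ h] with ω hω
    rw [integral_sub ((hX.const_mul b).integrable one_le_two)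
      ((hY.const_mul a).integrable one_le_two), integral_const_mul, integral_const_mul] at hω
    field_simp
    linarith
  · intro h
    have hconst : (fun ω ↦ b * X ω - a * Y ω) =ᵐ[μ] fun _ ↦ b * μ[X] - a * μ[Y] := by
      filter_upwards [h] with ω hω
      rw [hω]
      field_simp
      ring
    rw [variance_congr hconst]
    simp [variance_eq_integral aemeasurable_const]

end ProbabilityTheory

open ProbabilityTheory

abbrev volIoo01 : Measure ℝ := volume.restrict (Ioo 0 1)

instance : IsProbabilityMeasure volIoo01 := ⟨by simp [Real.volume_Ioo]⟩

lemma sqInt_iff_memLp {f : ℝ → ℝ} : SqInt f ↔ MemLp f 2 volIoo01 := by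
  refine ⟨fun hf ↦ (memLp_two_iff_integrable_sq hf.1.aestronglyMeasurable).2 hf.2,
    fun hf ↦ ⟨hf.integrable one_le_two, hf.integrable_sq⟩⟩

lemma variance_eq_intI_sq_sub {f : ℝ → ℝ} (hf : SqInt f) :
    Var[f; volIoo01] = intI (fun u ↦ f u ^ 2) - intI f ^ 2 :=
  variance_eq_sub (sqInt_iff_memLp.1 hf)

lemma intI_mul_eq_covariance_add {f g : ℝ → ℝ} (hf : SqInt f) (hg : SqInt g) :
    intI (fun u ↦ f u * g u) = cov[f, g; volIoo01] + intI f * intI g := by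
  rw [covariance_eq_sub (sqInt_iff_memLp.1 hf) (sqInt_iff_memLp.1 hg)]
  simp [intI]

lemma memM_iff {μ σ : ℝ} {q : ℝ → ℝ} :
    MemM μ σ q ↔ IsQuantile q ∧ intI q = μ ∧ Var[q; volIoo01] = σ ^ 2 := by
  refine and_congr_right fun hq ↦ and_congr_right fun hμ ↦ ?_
  rw [variance_eq_intI_sq_sub hq.2, hμ]
  constructor <;> intro h <;> linarith

lemma memM_const_add_div_mul_sub_one {γ : ℝ → ℝ} (hγmono : MonotoneOn γ (Ioo (0:ℝ) 1))
    (hγsq : SqInt γ) (hγ1 : intI γ = 1) {μ σ σ0 : ℝ} (hσ : 0 < σ) (hσ0 : 0 < σ0)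
    (hγvar : Var[γ; volIoo01] = σ0 ^ 2) :
    MemM μ σ (fun u ↦ μ + σ / σ0 * (γ u - 1)) := by
  have hγ : MemLp γ 2 volIoo01 := sqInt_iff_memLp.1 hγsq
  refine memM_iff.2 ⟨⟨?_, ?_⟩, ?_, ?_⟩
  · exact fun u hu v hv huv ↦ add_le_add_right (mul_le_mul_of_nonneg_left
      (sub_le_sub_right (hγmono hu hv huv) 1) (div_pos hσ hσ0).le) μ
  · exact sqInt_iff_memLp.2 ((memLp_const μ).add ((hγ.sub (memLp_const 1)).const_mul _))
  · have hγint : Integrable γ volIoo01 := hγ.integrable one_le_two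
    change ∫ u, (μ + σ / σ0 * (γ u - 1)) ∂volIoo01 = μ
    rw [integral_add (integrable_const μ) (by fun_prop), integral_const_mul,
      integral_sub hγint (integrable_const 1), show ∫ u, γ u ∂volIoo01 = 1 from hγ1]
    simp
  · have hγm := hγ.aestronglyMeasurable
    rw [variance_const_add (by fun_prop), variance_const_mul, variance_sub_const hγm, hγvar]
    field_simp

theorem statement2
    (μ σ : ℝ) (hσpos : 0 < σ)
    (γ : ℝ → ℝ) (hγmono : MonotoneOn γ (Ioo (0:ℝ) 1)) (hγsq : SqInt γ)
    (hγ1 : intI γ = 1)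
    (σ0 : ℝ) (hσ0 : σ0 = Real.sqrt (intI (fun u => γ u ^ 2) - 1)) (hσ0pos : 0 < σ0) :
    MemM μ σ (fun u => μ + σ / σ0 * (γ u - 1)) ∧
    ∀ q : ℝ → ℝ, MemM μ σ q →
      intI (fun u => γ u * q u) ≤ μ + σ * σ0 ∧
      (intI (fun u => γ u * q u) = μ + σ * σ0 ↔
        AeEqI q (fun u => μ + σ / σ0 * (γ u - 1))) := by
  have hγ : MemLp γ 2 volIoo01 := sqInt_iff_memLp.1 hγsq
  have hγvar : Var[γ; volIoo01] = σ0 ^ 2 := by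
    rw [variance_eq_intI_sq_sub hγsq, hγ1, hσ0,
      Real.sq_sqrt (Real.sqrt_pos.1 (hσ0 ▸ hσ0pos)).le]
    ring
  refine ⟨memM_const_add_div_mul_sub_one hγmono hγsq hγ1 hσpos hσ0pos hγvar, fun q hq ↦ ?_⟩
  obtain ⟨hqQ, hqμ, hqvar⟩ := memM_iff.1 hq
  have hqL : MemLp q 2 volIoo01 := sqInt_iff_memLp.1 hqQ.2
  have hle := covariance_le_mul_of_variance_eq_sq hγ hqL hσ0pos hσpos hγvar hqvar
  have heq := covariance_eq_mul_iff_of_variance_eq_sq hγ hqL hσ0pos hσpos hγvar hqvar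
  rw [show ∫ u, q u ∂volIoo01 = μ from hqμ, show ∫ u, γ u ∂volIoo01 = 1 from hγ1] at heq
  rw [intI_mul_eq_covariance_add hγsq hqQ.2, hγ1, hqμ, one_mul, add_comm _ μ, mul_comm σ σ0,
    add_right_inj]
  exact ⟨by linarith, heq⟩
end
end

section
/- (Proposition 3.1) For every δ > 0, the function q_δ belongs to M(μ,σ) and its squared Wasserstein distance to the reference satisfies ε_min ≤ d²(q_F, q_δ) ≤ ε_max, where ε_max := ε_min + 2σσ_F(1 − ρ). -/
open MeasureTheory Set Filter

noncomputable section

/-- `σ_δ = sqrt(σ₀² + 4δ²σ_F² + 4δσ₀σ_Fρ)`. -/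
def sigD (σ0 σF ρ δ : ℝ) : ℝ := Real.sqrt (σ0 ^ 2 + 4 * δ ^ 2 * σF ^ 2 + 4 * δ * σ0 * σF * ρ)

/-- The candidate optimizer `q_δ(u) = μ − (σ/σ_δ) μ_δ + (σ/σ_δ)(γ(u) + 2δ q_F(u))`,
where `μ_δ = 1 + 2δμ_F`. -/
def qD (μ σ μF σ0 σF ρ δ : ℝ) (γ qF : ℝ → ℝ) : ℝ → ℝ := fun u =>
  μ - σ / sigD σ0 σF ρ δ * (1 + 2 * δ * μF) + σ / sigD σ0 σF ρ δ * (γ u + 2 * δ * qF u)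

/-! ### Auxiliary lemmas -/

lemma volIoo_lt_top : (volume : Measure ℝ) (Ioo (0:ℝ) 1) < ⊤ := by
  rw [Real.volume_Ioo]; exact ENNReal.ofReal_lt_top

lemma intI_const (c : ℝ) : intI (fun _ => c) = c := by
  rw [intI, setIntegral_const, Real.volume_real_Ioo]
  norm_num

lemma intIOn_const (c : ℝ) : IntegrableOn (fun _ => c) (Ioo (0:ℝ) 1) volume :=
  integrableOn_const volIoo_lt_top.ne

lemma intI_add {f g : ℝ → ℝ} (hf : IntegrableOn f (Ioo (0:ℝ) 1) volume)
    (hg : IntegrableOn g (Ioo (0:ℝ) 1) volume) :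
    intI (fun u => f u + g u) = intI f + intI g :=
  integral_add hf hg

lemma intI_cmul (c : ℝ) (f : ℝ → ℝ) : intI (fun u => c * f u) = c * intI f :=
  integral_const_mul c f

lemma intI_nonneg {f : ℝ → ℝ} (h : ∀ u ∈ Ioo (0:ℝ) 1, 0 ≤ f u) : 0 ≤ intI f :=
  setIntegral_nonneg measurableSet_Ioo h

instance : IsFiniteMeasure ((volume : Measure ℝ).restrict (Ioo (0:ℝ) 1)) := by
  constructor
  rw [Measure.restrict_apply_univ, Real.volume_Ioo]
  norm_num

lemma sqint_memℒp {f : ℝ → ℝ} (hf : SqInt f) :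
    MemLp f 2 ((volume : Measure ℝ).restrict (Ioo (0:ℝ) 1)) :=
  (memLp_two_iff_integrable_sq hf.1.aestronglyMeasurable).2 hf.2

lemma sqint_mul {f g : ℝ → ℝ} (hf : SqInt f) (hg : SqInt g) :
    IntegrableOn (fun u => f u * g u) (Ioo (0:ℝ) 1) volume := by
  have hsum : MemLp (f + g) 2 ((volume : Measure ℝ).restrict (Ioo (0:ℝ) 1)) :=
    (sqint_memℒp hf).add (sqint_memℒp hg)
  have h1 : IntegrableOn (fun u => (f u + g u) ^ 2) (Ioo (0:ℝ) 1) volume := by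
    simpa [Pi.add_apply, IntegrableOn] using hsum.integrable_sq
  have h2 : (fun u => ((f u + g u) ^ 2 - f u ^ 2 - g u ^ 2) / 2) = fun u => f u * g u := by
    funext u; ring
  rw [← h2]
  exact ((h1.sub hf.2).sub hg.2).div_const 2

lemma sqint_combo {f g : ℝ → ℝ} (hf : SqInt f) (hg : SqInt g) (a b e : ℝ) :
    SqInt (fun u => a + b * f u + e * g u) := by
  have h : MemLp (fun u => a + b * f u + e * g u) 2
      ((volume : Measure ℝ).restrict (Ioo (0:ℝ) 1)) := by
    exact ((memLp_const a).add ((sqint_memℒp hf).const_mul b)).add ((sqint_memℒp hg).const_mul e)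
  exact ⟨h.integrable one_le_two, h.integrable_sq⟩

lemma intI_combo1 {f g : ℝ → ℝ} (hfi : IntegrableOn f (Ioo (0:ℝ) 1) volume)
    (hgi : IntegrableOn g (Ioo (0:ℝ) 1) volume) (a b e : ℝ) :
    intI (fun u => a + b * f u + e * g u) = a + b * intI f + e * intI g := by
  have hbf : IntegrableOn (fun u => b * f u) (Ioo (0:ℝ) 1) volume := hfi.const_mul b
  have heg : IntegrableOn (fun u => e * g u) (Ioo (0:ℝ) 1) volume := hgi.const_mul e
  have habf : IntegrableOn (fun u => a + b * f u) (Ioo (0:ℝ) 1) volume :=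
    (intIOn_const a).add hbf
  have e1 : intI (fun u => a + b * f u + e * g u)
      = intI (fun u => a + b * f u) + intI (fun u => e * g u) := intI_add habf heg
  have e2 : intI (fun u => a + b * f u)
      = intI (fun _ => a) + intI (fun u => b * f u) := intI_add (intIOn_const a) hbf
  rw [e1, e2, intI_const, intI_cmul, intI_cmul]

lemma intI_combo2 {f g : ℝ → ℝ} (hfi : IntegrableOn f (Ioo (0:ℝ) 1) volume)
    (hf2i : IntegrableOn (fun u => f u ^ 2) (Ioo (0:ℝ) 1) volume)
    (hgi : IntegrableOn g (Ioo (0:ℝ) 1) volume)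
    (hg2i : IntegrableOn (fun u => g u ^ 2) (Ioo (0:ℝ) 1) volume)
    (hmul : IntegrableOn (fun u => f u * g u) (Ioo (0:ℝ) 1) volume) (a b e : ℝ) :
    intI (fun u => (a + b * f u + e * g u) ^ 2)
      = a ^ 2 + b ^ 2 * intI (fun u => f u ^ 2) + e ^ 2 * intI (fun u => g u ^ 2)
        + 2 * a * b * intI f + 2 * a * e * intI g
        + 2 * b * e * intI (fun u => f u * g u) := by
  have h1 : IntegrableOn (fun u => b ^ 2 * f u ^ 2) (Ioo (0:ℝ) 1) volume := hf2i.const_mul _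
  have h2 : IntegrableOn (fun u => e ^ 2 * g u ^ 2) (Ioo (0:ℝ) 1) volume := hg2i.const_mul _
  have h3 : IntegrableOn (fun u => 2 * a * b * f u) (Ioo (0:ℝ) 1) volume := hfi.const_mul _
  have h4 : IntegrableOn (fun u => 2 * a * e * g u) (Ioo (0:ℝ) 1) volume := hgi.const_mul _
  have h5 : IntegrableOn (fun u => 2 * b * e * (f u * g u)) (Ioo (0:ℝ) 1) volume :=
    hmul.const_mul _
  have t4 : IntegrableOn (fun u => 2 * a * e * g u + 2 * b * e * (f u * g u))
      (Ioo (0:ℝ) 1) volume := h4.add h5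
  have t3 : IntegrableOn (fun u => 2 * a * b * f u
      + (2 * a * e * g u + 2 * b * e * (f u * g u))) (Ioo (0:ℝ) 1) volume := h3.add t4
  have t2 : IntegrableOn (fun u => e ^ 2 * g u ^ 2 + (2 * a * b * f u
      + (2 * a * e * g u + 2 * b * e * (f u * g u)))) (Ioo (0:ℝ) 1) volume := h2.add t3
  have t1 : IntegrableOn (fun u => b ^ 2 * f u ^ 2 + (e ^ 2 * g u ^ 2 + (2 * a * b * f u
      + (2 * a * e * g u + 2 * b * e * (f u * g u))))) (Ioo (0:ℝ) 1) volume := h1.add t2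
  have key : (fun u => (a + b * f u + e * g u) ^ 2)
      = fun u => a ^ 2 + (b ^ 2 * f u ^ 2 + (e ^ 2 * g u ^ 2 + (2 * a * b * f u
        + (2 * a * e * g u + 2 * b * e * (f u * g u))))) := by
    funext u; ring
  have e0 : intI (fun u => a ^ 2 + (b ^ 2 * f u ^ 2 + (e ^ 2 * g u ^ 2 + (2 * a * b * f u
        + (2 * a * e * g u + 2 * b * e * (f u * g u))))))
      = intI (fun _ => a ^ 2) + intI (fun u => b ^ 2 * f u ^ 2 + (e ^ 2 * g u ^ 2
        + (2 * a * b * f u + (2 * a * e * g u + 2 * b * e * (f u * g u))))) :=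
    intI_add (intIOn_const _) t1
  have e1 : intI (fun u => b ^ 2 * f u ^ 2 + (e ^ 2 * g u ^ 2 + (2 * a * b * f u
        + (2 * a * e * g u + 2 * b * e * (f u * g u)))))
      = intI (fun u => b ^ 2 * f u ^ 2) + intI (fun u => e ^ 2 * g u ^ 2 + (2 * a * b * f u
        + (2 * a * e * g u + 2 * b * e * (f u * g u)))) := intI_add h1 t2
  have e2 : intI (fun u => e ^ 2 * g u ^ 2 + (2 * a * b * f u
        + (2 * a * e * g u + 2 * b * e * (f u * g u))))
      = intI (fun u => e ^ 2 * g u ^ 2) + intI (fun u => 2 * a * b * f u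
        + (2 * a * e * g u + 2 * b * e * (f u * g u))) := intI_add h2 t3
  have e3 : intI (fun u => 2 * a * b * f u + (2 * a * e * g u + 2 * b * e * (f u * g u)))
      = intI (fun u => 2 * a * b * f u)
        + intI (fun u => 2 * a * e * g u + 2 * b * e * (f u * g u)) := intI_add h3 t4
  have e4 : intI (fun u => 2 * a * e * g u + 2 * b * e * (f u * g u))
      = intI (fun u => 2 * a * e * g u) + intI (fun u => 2 * b * e * (f u * g u)) :=
    intI_add h4 h5
  rw [key, e0, e1, e2, e3, e4, intI_const, intI_cmul, intI_cmul, intI_cmul, intI_cmul, intI_cmul]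
  ring

/-- Chebyshev's integral inequality on (0,1) for two nondecreasing functions. -/
lemma chebyshev_int {f g : ℝ → ℝ} (hfm : MonotoneOn f (Ioo (0:ℝ) 1))
    (hgm : MonotoneOn g (Ioo (0:ℝ) 1))
    (hfi : IntegrableOn f (Ioo (0:ℝ) 1) volume)
    (hgi : IntegrableOn g (Ioo (0:ℝ) 1) volume)
    (hmul : IntegrableOn (fun u => f u * g u) (Ioo (0:ℝ) 1) volume) :
    intI f * intI g ≤ intI (fun u => f u * g u) := by
  have inner_eq : ∀ u : ℝ, intI (fun v => (f u - f v) * (g u - g v))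
      = f u * g u + (-(f u)) * intI g + ((-(g u)) * intI f + intI (fun v => f v * g v)) := by
    intro u
    have h2 : IntegrableOn (fun v => (-(f u)) * g v) (Ioo (0:ℝ) 1) volume := hgi.const_mul _
    have h3 : IntegrableOn (fun v => (-(g u)) * f v) (Ioo (0:ℝ) 1) volume := hfi.const_mul _
    have t3 : IntegrableOn (fun v => (-(g u)) * f v + f v * g v) (Ioo (0:ℝ) 1) volume :=
      h3.add hmul
    have t2 : IntegrableOn (fun v => (-(f u)) * g v + ((-(g u)) * f v + f v * g v))
        (Ioo (0:ℝ) 1) volume := h2.add t3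
    have key : (fun v => (f u - f v) * (g u - g v))
        = fun v => f u * g u + ((-(f u)) * g v + ((-(g u)) * f v + f v * g v)) := by
      funext v; ring
    have e0 : intI (fun v => f u * g u + ((-(f u)) * g v + ((-(g u)) * f v + f v * g v)))
        = intI (fun _ => f u * g u)
          + intI (fun v => (-(f u)) * g v + ((-(g u)) * f v + f v * g v)) :=
      intI_add (intIOn_const _) t2
    have e1 : intI (fun v => (-(f u)) * g v + ((-(g u)) * f v + f v * g v))
        = intI (fun v => (-(f u)) * g v) + intI (fun v => (-(g u)) * f v + f v * g v) :=
      intI_add h2 t3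
    have e2 : intI (fun v => (-(g u)) * f v + f v * g v)
        = intI (fun v => (-(g u)) * f v) + intI (fun v => f v * g v) := intI_add h3 hmul
    rw [key, e0, e1, e2, intI_const, intI_cmul, intI_cmul]
    ring
  have inner_nonneg : ∀ u ∈ Ioo (0:ℝ) 1, 0 ≤ intI (fun v => (f u - f v) * (g u - g v)) := by
    intro u hu
    apply intI_nonneg
    intro v hv
    rcases le_total u v with h | h
    · have h1 := hfm hu hv h
      have h2 := hgm hu hv h
      nlinarith
    · have h1 := hfm hv hu h
      have h2 := hgm hv hu h
      nlinarith
  have big : 0 ≤ intI (fun u => f u * g u + (-(intI g)) * f u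
      + ((-(intI f)) * g u + intI (fun v => f v * g v))) := by
    apply intI_nonneg
    intro u hu
    have h := inner_nonneg u hu
    rw [inner_eq u] at h
    have expand : f u * g u + (-(intI g)) * f u
        + ((-(intI f)) * g u + intI (fun v => f v * g v))
        = f u * g u + (-(f u)) * intI g + ((-(g u)) * intI f + intI (fun v => f v * g v)) := by
      ring
    rw [expand]
    exact h
  have h2 : IntegrableOn (fun u => (-(intI g)) * f u) (Ioo (0:ℝ) 1) volume := hfi.const_mul _
  have h3 : IntegrableOn (fun u => (-(intI f)) * g u) (Ioo (0:ℝ) 1) volume := hgi.const_mul _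
  have t1 : IntegrableOn (fun u => f u * g u + (-(intI g)) * f u) (Ioo (0:ℝ) 1) volume :=
    hmul.add h2
  have t2 : IntegrableOn (fun u => (-(intI f)) * g u + intI (fun v => f v * g v))
      (Ioo (0:ℝ) 1) volume := h3.add (intIOn_const _)
  have e0 : intI (fun u => f u * g u + (-(intI g)) * f u
        + ((-(intI f)) * g u + intI (fun v => f v * g v)))
      = intI (fun u => f u * g u + (-(intI g)) * f u)
        + intI (fun u => (-(intI f)) * g u + intI (fun v => f v * g v)) := intI_add t1 t2
  have e1 : intI (fun u => f u * g u + (-(intI g)) * f u)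
      = intI (fun u => f u * g u) + intI (fun u => (-(intI g)) * f u) := intI_add hmul h2
  have e2 : intI (fun u => (-(intI f)) * g u + intI (fun v => f v * g v))
      = intI (fun u => (-(intI f)) * g u) + intI (fun _ => intI (fun v => f v * g v)) :=
    intI_add h3 (intIOn_const _)
  rw [e0, e1, e2, intI_const, intI_cmul, intI_cmul] at big
  nlinarith [big]

set_option maxHeartbeats 1600000 in
theorem statement3
    (μ μF σ σF : ℝ) (hσpos : 0 < σ) (hσFpos : 0 < σF)
    (qF : ℝ → ℝ) (hqF : IsQuantile qF)
    (hqFm : intI qF = μF) (hqF2 : intI (fun u => qF u ^ 2) = μF ^ 2 + σF ^ 2)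
    (γ : ℝ → ℝ) (hγmono : MonotoneOn γ (Ioo (0:ℝ) 1)) (hγsq : SqInt γ)
    (hγ1 : intI γ = 1)
    (σ0 : ℝ) (hσ0 : σ0 = Real.sqrt (intI (fun u => γ u ^ 2) - 1)) (hσ0pos : 0 < σ0)
    (ρ : ℝ) (hρ : ρ = (intI (fun u => γ u * qF u) - μF) / (σ0 * σF))
    (εmin : ℝ) (hεmin : εmin = (μF - μ) ^ 2 + (σF - σ) ^ 2)
    (εmax : ℝ) (hεmax : εmax = εmin + 2 * σ * σF * (1 - ρ))
    (δ : ℝ) (hδ : 0 < δ) :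
    MemM μ σ (qD μ σ μF σ0 σF ρ δ γ qF) ∧
    εmin ≤ W2 qF (qD μ σ μF σ0 σF ρ δ γ qF) ∧
    W2 qF (qD μ σ μF σ0 σF ρ δ γ qF) ≤ εmax := by
  have hγi := hγsq.1
  have hγ2i := hγsq.2
  have hqFi := hqF.2.1
  have hqF2i := hqF.2.2
  have hmul : IntegrableOn (fun u => γ u * qF u) (Ioo (0:ℝ) 1) volume :=
    sqint_mul hγsq hqF.2
  obtain ⟨C, hCdef⟩ : ∃ C, C = intI (fun u => γ u * qF u) := ⟨_, rfl⟩
  rw [← hCdef] at hρ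
  -- second moment of γ
  have harg : 0 < intI (fun u => γ u ^ 2) - 1 :=
    Real.sqrt_pos.mp (by rw [← hσ0]; exact hσ0pos)
  have hσ0sq : σ0 ^ 2 = intI (fun u => γ u ^ 2) - 1 := by
    rw [hσ0, Real.sq_sqrt harg.le]
  have hG2 : intI (fun u => γ u ^ 2) = 1 + σ0 ^ 2 := by linarith
  -- C in terms of ρ
  have hC : C = μF + σ0 * σF * ρ := by
    have h : σ0 * σF * ρ = C - μF := by
      rw [hρ]
      field_simp
    linarith
  -- Chebyshev: 0 ≤ ρ
  have hCge : intI γ * intI qF ≤ C := by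
    rw [hCdef]; exact chebyshev_int hγmono hqF.1 hγi hqFi hmul
  rw [hγ1, hqFm, one_mul] at hCge
  have hρ0 : 0 ≤ ρ := by
    rw [hρ]
    apply div_nonneg (by linarith) (by positivity)
  -- Cauchy–Schwarz: ρ ≤ 1
  have hcs0 : 0 ≤ intI (fun u => ((σ0 * μF - σF) + σF * γ u + (-σ0) * qF u) ^ 2) :=
    intI_nonneg (fun u _ => sq_nonneg _)
  rw [intI_combo2 hγi hγ2i hqFi hqF2i hmul, hG2, hγ1, hqFm, hqF2, ← hCdef] at hcs0
  have hσ0σF : 0 < σ0 * σF := mul_pos hσ0pos hσFpos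
  have hρ1 : ρ ≤ 1 := by
    have hCle : C ≤ μF + σ0 * σF := by nlinarith
    nlinarith [hC]
  -- σ_δ
  have hA : 0 < σ0 ^ 2 + 4 * δ ^ 2 * σF ^ 2 + 4 * δ * σ0 * σF * ρ := by
    have h1 : 0 ≤ 4 * δ * σ0 * σF * ρ := by positivity
    nlinarith [sq_nonneg (δ * σF)]
  obtain ⟨s, hsdef⟩ : ∃ s, s = sigD σ0 σF ρ δ := ⟨_, rfl⟩
  have hspos : 0 < s := by
    rw [hsdef, sigD]
    exact Real.sqrt_pos.2 hA
  have hs2 : s ^ 2 = σ0 ^ 2 + 4 * δ ^ 2 * σF ^ 2 + 4 * δ * σ0 * σF * ρ := by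
    rw [hsdef, sigD, Real.sq_sqrt hA.le]
  obtain ⟨c, hcdef⟩ : ∃ c, c = σ / s := ⟨_, rfl⟩
  have hcpos : 0 < c := by rw [hcdef]; exact div_pos hσpos hspos
  have hcs' : c * s = σ := by rw [hcdef]; exact div_mul_cancel₀ σ hspos.ne'
  -- qD in combination form
  have hqDeq : qD μ σ μF σ0 σF ρ δ γ qF
      = fun u => (μ - c * (1 + 2 * δ * μF)) + c * γ u + (2 * δ * c) * qF u := by
    funext u
    simp only [qD, ← hsdef, ← hcdef]
    ring
  rw [hqDeq]
  -- value of W2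
  have hW2f : (fun u => (qF u - ((μ - c * (1 + 2 * δ * μF)) + c * γ u + (2 * δ * c) * qF u)) ^ 2)
      = fun u => ((-(μ - c * (1 + 2 * δ * μF))) + (-c) * γ u + (1 - 2 * δ * c) * qF u) ^ 2 := by
    funext u; ring
  have hWval : W2 qF (fun u => (μ - c * (1 + 2 * δ * μF)) + c * γ u + (2 * δ * c) * qF u)
      = (μF - μ) ^ 2 + σF ^ 2 + σ ^ 2 - 2 * σF * (c * (σ0 * ρ + 2 * δ * σF)) := by
    rw [W2, hW2f, intI_combo2 hγi hγ2i hqFi hqF2i hmul, hG2, hγ1, hqFm, hqF2, ← hCdef, hC]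
    linear_combination (-(c ^ 2)) * hs2 + (c * s + σ) * hcs'
  refine ⟨⟨⟨?_, ?_⟩, ?_, ?_⟩, ?_, ?_⟩
  · -- monotone
    intro u hu v hv huv
    have h1 := hγmono hu hv huv
    have h2 := hqF.1 hu hv huv
    have hc2 : (0:ℝ) ≤ 2 * δ * c := by positivity
    have hm1 := mul_le_mul_of_nonneg_left h1 hcpos.le
    have hm2 := mul_le_mul_of_nonneg_left h2 hc2
    dsimp only
    linarith
  · exact sqint_combo hγsq hqF.2 _ _ _
  · rw [intI_combo1 hγi hqFi, hγ1, hqFm]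
    ring
  · rw [intI_combo2 hγi hγ2i hqFi hqF2i hmul, hG2, hγ1, hqFm, hqF2, ← hCdef, hC]
    linear_combination (-(c ^ 2)) * hs2 + (c * s + σ) * hcs'
  · -- εmin ≤ W2
    rw [hWval, hεmin]
    have hx : 0 ≤ σ0 * ρ + 2 * δ * σF := by positivity
    have h1ρ : 0 ≤ σ0 ^ 2 * ((1 - ρ) * (1 + ρ)) :=
      mul_nonneg (sq_nonneg σ0) (mul_nonneg (by linarith) (by linarith))
    have hxs : (σ0 * ρ + 2 * δ * σF) ^ 2 ≤ s ^ 2 := by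
      rw [hs2]
      have expand : σ0 ^ 2 + 4 * δ ^ 2 * σF ^ 2 + 4 * δ * σ0 * σF * ρ
          - (σ0 * ρ + 2 * δ * σF) ^ 2 = σ0 ^ 2 * ((1 - ρ) * (1 + ρ)) := by ring
      linarith [expand, h1ρ]
    have hle : σ0 * ρ + 2 * δ * σF ≤ s := (abs_le_of_sq_le_sq' hxs hspos.le).2
    have hm1 : c * (σ0 * ρ + 2 * δ * σF) ≤ c * s := mul_le_mul_of_nonneg_left hle hcpos.le
    have hm2 : 2 * σF * (c * (σ0 * ρ + 2 * δ * σF)) ≤ 2 * σF * (c * s) :=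
      mul_le_mul_of_nonneg_left hm1 (by positivity)
    rw [hcs'] at hm2
    have hsq : (σF - σ) ^ 2 = σF ^ 2 + σ ^ 2 - 2 * (σF * σ) := by ring
    linarith [hm2, hsq]
  · -- W2 ≤ εmax
    rw [hWval, hεmax, hεmin]
    have hx : 0 ≤ σ0 * ρ + 2 * δ * σF := by positivity
    have h1ρ : 0 ≤ (1 - ρ) * (1 + ρ) := mul_nonneg (by linarith) (by linarith)
    have k1 : 0 ≤ 4 * δ * σ0 * σF * ρ * ((1 - ρ) * (1 + ρ)) := mul_nonneg (by positivity) h1ρ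
    have k2 : 0 ≤ 4 * δ ^ 2 * σF ^ 2 * ((1 - ρ) * (1 + ρ)) := mul_nonneg (by positivity) h1ρ
    have hge2 : (ρ * s) ^ 2 ≤ (σ0 * ρ + 2 * δ * σF) ^ 2 := by
      have hrs : (ρ * s) ^ 2 = ρ ^ 2 * (σ0 ^ 2 + 4 * δ ^ 2 * σF ^ 2 + 4 * δ * σ0 * σF * ρ) := by
        rw [mul_pow, hs2]
      have expand : (σ0 * ρ + 2 * δ * σF) ^ 2
          - ρ ^ 2 * (σ0 ^ 2 + 4 * δ ^ 2 * σF ^ 2 + 4 * δ * σ0 * σF * ρ)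
          = 4 * δ * σ0 * σF * ρ * ((1 - ρ) * (1 + ρ))
            + 4 * δ ^ 2 * σF ^ 2 * ((1 - ρ) * (1 + ρ)) := by ring
      linarith [hrs, expand, k1, k2]
    have hge : ρ * s ≤ σ0 * ρ + 2 * δ * σF := (abs_le_of_sq_le_sq' hge2 hx).2
    have hm1 : c * (ρ * s) ≤ c * (σ0 * ρ + 2 * δ * σF) := mul_le_mul_of_nonneg_left hge hcpos.le
    have hm2 : 2 * σF * (c * (ρ * s)) ≤ 2 * σF * (c * (σ0 * ρ + 2 * δ * σF)) :=
      mul_le_mul_of_nonneg_left hm1 (by positivity)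
    have hrw : 2 * σF * (c * (ρ * s)) = 2 * σ * σF * ρ := by rw [← hcs']; ring
    have hsq : (σF - σ) ^ 2 = σF ^ 2 + σ ^ 2 - 2 * (σF * σ) := by ring
    linarith [hm2, hrw, hsq]
end
end

section
/- Let σ₀ > 0, σ_F > 0 and ρ ∈ (−1, 1) be real numbers, and define f : (0,∞) → ℝ by f(δ) := (2δσ_F² + σ₀σ_Fρ)/(σ_F · sqrt(σ₀² + 4δ²σ_F² + 4δσ₀σ_Fρ)). Then f is strictly increasing on (0,∞), f(δ) → ρ as δ → 0⁺, and f(δ) → 1 as δ → +∞. -/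
open Set Filter

private lemma gmono (c : ℝ) (hc : 0 < c) :
    StrictMono (fun u : ℝ => u / Real.sqrt (u ^ 2 + c)) := by
  intro u v huv
  have hu : (0:ℝ) < u ^ 2 + c := by positivity
  have hv : (0:ℝ) < v ^ 2 + c := by positivity
  have hsu := Real.sqrt_pos.mpr hu
  have hsv := Real.sqrt_pos.mpr hv
  have hsu2 := Real.sq_sqrt hu.le
  have hsv2 := Real.sq_sqrt hv.le
  dsimp only
  rw [div_lt_div_iff₀ hsu hsv]
  rcases le_or_gt 0 u with h | h
  · have hv0 : 0 < v := lt_of_le_of_lt h huv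
    have hsq : (u * Real.sqrt (v ^ 2 + c)) ^ 2 < (v * Real.sqrt (u ^ 2 + c)) ^ 2 := by
      rw [mul_pow, mul_pow, hsu2, hsv2]
      nlinarith [mul_self_lt_mul_self h huv, hc]
    exact lt_of_pow_lt_pow_left₀ 2 (by positivity) hsq
  · rcases le_or_gt 0 v with h2 | h2
    · have h3 : u * Real.sqrt (v ^ 2 + c) < 0 := mul_neg_of_neg_of_pos h hsv
      have h4 : 0 ≤ v * Real.sqrt (u ^ 2 + c) := mul_nonneg h2 hsu.le
      linarith
    · have hsq : (-(v * Real.sqrt (u ^ 2 + c))) ^ 2 < (-(u * Real.sqrt (v ^ 2 + c))) ^ 2 := by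
        rw [neg_sq, neg_sq, mul_pow, mul_pow, hsu2, hsv2]
        nlinarith [mul_self_lt_mul_self (by linarith : (0:ℝ) ≤ -v) (by linarith : -v < -u), hc]
      have h5 : 0 ≤ -(u * Real.sqrt (v ^ 2 + c)) := by
        have := mul_nonpos_of_nonpos_of_nonneg h.le hsv.le
        linarith
      have := lt_of_pow_lt_pow_left₀ 2 h5 hsq
      linarith

private lemma glim (c : ℝ) (hc : 0 < c) :
    Tendsto (fun u : ℝ => u / Real.sqrt (u ^ 2 + c)) atTop (nhds 1) := by
  have h1 : Tendsto (fun u : ℝ => u ^ 2 / (u ^ 2 + c)) atTop (nhds 1) := by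
    have hden : Tendsto (fun u : ℝ => u ^ 2 + c) atTop atTop :=
      tendsto_atTop_add_const_right _ c (tendsto_pow_atTop two_ne_zero)
    have h0 : Tendsto (fun u : ℝ => c / (u ^ 2 + c)) atTop (nhds 0) :=
      tendsto_const_nhds.div_atTop hden
    have hsub : Tendsto (fun u : ℝ => 1 - c / (u ^ 2 + c)) atTop (nhds (1 - 0)) :=
      Tendsto.sub tendsto_const_nhds h0
    rw [sub_zero] at hsub
    refine hsub.congr (fun u => ?_)
    have hne : u ^ 2 + c ≠ 0 := by positivity
    field_simp
    ring
  have h2 := (Real.continuous_sqrt.tendsto 1).comp h1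
  rw [Real.sqrt_one] at h2
  refine h2.congr' ?_
  filter_upwards [eventually_gt_atTop 0] with u hu
  have hQ : (0:ℝ) ≤ u ^ 2 + c := by positivity
  simp only [Function.comp]
  rw [Real.sqrt_div (sq_nonneg u), Real.sqrt_sq hu.le]

theorem statement5 (σ0 σF ρ : ℝ) (hσ0 : 0 < σ0) (hσF : 0 < σF)
    (hρ1 : -1 < ρ) (hρ2 : ρ < 1) :
    StrictMonoOn
      (fun δ : ℝ => (2 * δ * σF ^ 2 + σ0 * σF * ρ) /
        (σF * Real.sqrt (σ0 ^ 2 + 4 * δ ^ 2 * σF ^ 2 + 4 * δ * σ0 * σF * ρ))) (Ioi 0) ∧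
    Tendsto
      (fun δ : ℝ => (2 * δ * σF ^ 2 + σ0 * σF * ρ) /
        (σF * Real.sqrt (σ0 ^ 2 + 4 * δ ^ 2 * σF ^ 2 + 4 * δ * σ0 * σF * ρ)))
      (nhdsWithin 0 (Ioi 0)) (nhds ρ) ∧
    Tendsto
      (fun δ : ℝ => (2 * δ * σF ^ 2 + σ0 * σF * ρ) /
        (σF * Real.sqrt (σ0 ^ 2 + 4 * δ ^ 2 * σF ^ 2 + 4 * δ * σ0 * σF * ρ)))
      atTop (nhds 1) := by
  set c := σ0 ^ 2 * (1 - ρ ^ 2) with hc_def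
  have hc : 0 < c := by
    have h1 : 0 < 1 - ρ ^ 2 := by nlinarith
    positivity
  have feq : (fun δ : ℝ => (2 * δ * σF ^ 2 + σ0 * σF * ρ) /
        (σF * Real.sqrt (σ0 ^ 2 + 4 * δ ^ 2 * σF ^ 2 + 4 * δ * σ0 * σF * ρ)))
      = fun δ : ℝ => (2 * δ * σF + σ0 * ρ) / Real.sqrt ((2 * δ * σF + σ0 * ρ) ^ 2 + c) := by
    funext δ
    have hkey : σ0 ^ 2 + 4 * δ ^ 2 * σF ^ 2 + 4 * δ * σ0 * σF * ρ
        = (2 * δ * σF + σ0 * ρ) ^ 2 + c := by rw [hc_def]; ring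
    have hnum : 2 * δ * σF ^ 2 + σ0 * σF * ρ = σF * (2 * δ * σF + σ0 * ρ) := by ring
    rw [hkey, hnum, mul_div_mul_left _ _ (ne_of_gt hσF)]
  refine ⟨?_, ?_, ?_⟩
  · rw [feq]
    have haff : StrictMono (fun δ : ℝ => 2 * δ * σF + σ0 * ρ) := by
      intro a b hab; dsimp only; nlinarith
    exact ((gmono c hc).comp haff).strictMonoOn _
  · have hQ0 : (0:ℝ) < σ0 ^ 2 + 4 * (0:ℝ) ^ 2 * σF ^ 2 + 4 * 0 * σ0 * σF * ρ := by nlinarith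
    have hcont : ContinuousAt (fun δ : ℝ => (2 * δ * σF ^ 2 + σ0 * σF * ρ) /
        (σF * Real.sqrt (σ0 ^ 2 + 4 * δ ^ 2 * σF ^ 2 + 4 * δ * σ0 * σF * ρ))) 0 := by
      apply ContinuousAt.div
      · fun_prop
      · exact continuousAt_const.mul
          (Real.continuous_sqrt.continuousAt.comp (by fun_prop))
      · have hs : 0 < Real.sqrt (σ0 ^ 2 + 4 * (0:ℝ) ^ 2 * σF ^ 2 + 4 * 0 * σ0 * σF * ρ) :=
          Real.sqrt_pos.mpr hQ0
        exact ne_of_gt (mul_pos hσF hs)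
    have htend := hcont.tendsto
    have hval : (2 * (0:ℝ) * σF ^ 2 + σ0 * σF * ρ) /
        (σF * Real.sqrt (σ0 ^ 2 + 4 * (0:ℝ) ^ 2 * σF ^ 2 + 4 * 0 * σ0 * σF * ρ)) = ρ := by
      rw [show σ0 ^ 2 + 4 * (0:ℝ) ^ 2 * σF ^ 2 + 4 * 0 * σ0 * σF * ρ = σ0 ^ 2 by ring,
        Real.sqrt_sq hσ0.le]
      field_simp
      ring
    rw [hval] at htend
    exact htend.mono_left nhdsWithin_le_nhds
  · rw [feq]
    have haff : Tendsto (fun δ : ℝ => 2 * δ * σF + σ0 * ρ) atTop atTop := by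
      apply tendsto_atTop_add_const_right
      have h2 : (0:ℝ) < 2 * σF := by linarith
      have := (tendsto_id (α := ℝ)).const_mul_atTop h2
      refine this.congr (fun δ => ?_)
      simp [id]
      ring
    exact (glim c hc).comp haff
end

section
/- (Lemma 3.1) Assume ρ < 1 and let ε ∈ (ε_min, ε_max). Then δ*(ε) > 0, the function q_{δ*(ε)} lies in M(μ,σ) with d²(q_F, q_{δ*(ε)}) = ε, and δ*(ε) is the unique δ > 0 satisfying d²(q_F, q_δ) = ε. -/
open MeasureTheory Set Filter

noncomputable section

set_option maxHeartbeats 2000000 in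
theorem statement6
    (μ μF σ σF : ℝ) (hσpos : 0 < σ) (hσFpos : 0 < σF)
    (qF : ℝ → ℝ) (hqF : IsQuantile qF)
    (hqFm : intI qF = μF) (hqF2 : intI (fun u => qF u ^ 2) = μF ^ 2 + σF ^ 2)
    (γ : ℝ → ℝ) (hγmono : MonotoneOn γ (Ioo (0:ℝ) 1)) (hγsq : SqInt γ)
    (hγ1 : intI γ = 1)
    (σ0 : ℝ) (hσ0 : σ0 = Real.sqrt (intI (fun u => γ u ^ 2) - 1)) (hσ0pos : 0 < σ0)
    (ρ : ℝ) (hρ : ρ = (intI (fun u => γ u * qF u) - μF) / (σ0 * σF))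
    (εmin : ℝ) (hεmin : εmin = (μF - μ) ^ 2 + (σF - σ) ^ 2)
    (εmax : ℝ) (hεmax : εmax = εmin + 2 * σ * σF * (1 - ρ))
    (hρ1 : ρ < 1)
    (ε : ℝ) (hε1 : εmin < ε) (hε2 : ε < εmax)
    (δs : ℝ)
    (hδs : δs = -(σ0 * ρ) / (2 * σF) +
      σ0 * Real.sqrt (1 - ρ ^ 2) * (εmin + 2 * σ * σF - ε) /
        (2 * σF * Real.sqrt ((εmin + 4 * σ * σF - ε) * (ε - εmin)))) :
    0 < δs ∧
    MemM μ σ (qD μ σ μF σ0 σF ρ δs γ qF) ∧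
    W2 qF (qD μ σ μF σ0 σF ρ δs γ qF) = ε ∧
    ∀ δ : ℝ, 0 < δ → W2 qF (qD μ σ μF σ0 σF ρ δ γ qF) = ε → δ = δs := by

  obtain ⟨hqFmono, hqFi, hqFi2⟩ := hqF
  obtain ⟨hγi, hγi2⟩ := hγsq
  simp only [intI] at hqFm hqF2 hγ1 hρ hσ0
  haveI : IsFiniteMeasure ((volume : Measure ℝ).restrict (Ioo (0:ℝ) 1)) := ⟨by
    rw [Measure.restrict_apply_univ, Real.volume_Ioo]; norm_num⟩
  have hconst : ∀ r : ℝ, (∫ _u in Ioo (0:ℝ) 1, r) = r := fun r => by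
    rw [setIntegral_const, measureReal_def, Real.volume_Ioo]
    norm_num
  have mγ : AEMeasurable γ ((volume : Measure ℝ).restrict (Ioo (0:ℝ) 1)) :=
    aemeasurable_restrict_of_monotoneOn measurableSet_Ioo hγmono
  have mq : AEMeasurable qF ((volume : Measure ℝ).restrict (Ioo (0:ℝ) 1)) :=
    aemeasurable_restrict_of_monotoneOn measurableSet_Ioo hqFmono
  have int_γq : IntegrableOn (fun u => γ u * qF u) (Ioo (0:ℝ) 1) volume := by
    refine Integrable.mono' ((hγi2.add hqFi2).div_const 2) ((mγ.mul mq).aestronglyMeasurable)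
      (Eventually.of_forall fun u => ?_)
    simp only [Pi.add_apply]
    rw [norm_mul, Real.norm_eq_abs, Real.norm_eq_abs]
    nlinarith [sq_nonneg (|γ u| - |qF u|), sq_abs (γ u), sq_abs (qF u), abs_nonneg (γ u),
      abs_nonneg (qF u)]
  -- second-moment identity for γ
  have hσ0sq : (∫ u in Ioo (0:ℝ) 1, γ u ^ 2) = 1 + σ0 ^ 2 := by
    have h0 : 0 ≤ (∫ u in Ioo (0:ℝ) 1, γ u ^ 2) - 1 := by
      by_contra h
      push_neg at h
      rw [hσ0, Real.sqrt_eq_zero'.mpr h.le] at hσ0pos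
      exact lt_irrefl 0 hσ0pos
    have h1 := Real.sq_sqrt h0
    rw [← hσ0] at h1
    linarith
  have hσ0σF : (0:ℝ) < σ0 * σF := mul_pos hσ0pos hσFpos
  have hX : (∫ u in Ioo (0:ℝ) 1, γ u * qF u) = μF + σ0 * σF * ρ := by
    rw [hρ]
    field_simp
    ring
  -- Chebyshev: ρ ≥ 0
  have hcheb : μF ≤ ∫ u in Ioo (0:ℝ) 1, γ u * qF u := by
    set ν : Measure ℝ := volume.restrict (Ioo (0:ℝ) 1) with hν
    have hone : ∫ _u, (1:ℝ) ∂ν = 1 := hconst 1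
    have int_one : Integrable (fun _ : ℝ => (1:ℝ)) ν := integrable_const 1
    have key : 0 ≤ ∫ p, (γ p.1 - γ p.2) * (qF p.1 - qF p.2) ∂(ν.prod ν) := by
      refine integral_nonneg_of_ae ?_
      have hpr : ν.prod ν = (volume.prod volume).restrict ((Ioo (0:ℝ) 1) ×ˢ (Ioo (0:ℝ) 1)) := by
        rw [hν, Measure.prod_restrict]
      rw [hpr]
      filter_upwards [ae_restrict_mem (measurableSet_Ioo.prod measurableSet_Ioo)] with p hp
      simp only [Pi.zero_apply]
      obtain ⟨h1, h2⟩ := hp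
      rcases le_total p.1 p.2 with h | h
      · have := hγmono h1 h2 h; have := hqFmono h1 h2 h; nlinarith
      · have := hγmono h2 h1 h; have := hqFmono h2 h1 h; nlinarith
    have exp : ∫ p, (γ p.1 - γ p.2) * (qF p.1 - qF p.2) ∂(ν.prod ν) =
        2 * ((∫ u, γ u * qF u ∂ν) - μF) := by
      have i1 : Integrable (fun p : ℝ × ℝ => (γ p.1 * qF p.1) * (1:ℝ)) (ν.prod ν) :=
        int_γq.mul_prod int_one
      have i2 : Integrable (fun p : ℝ × ℝ => γ p.1 * qF p.2) (ν.prod ν) := hγi.mul_prod hqFi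
      have i3 : Integrable (fun p : ℝ × ℝ => qF p.1 * γ p.2) (ν.prod ν) := hqFi.mul_prod hγi
      have i4 : Integrable (fun p : ℝ × ℝ => (1:ℝ) * (γ p.2 * qF p.2)) (ν.prod ν) :=
        int_one.mul_prod int_γq
      have i12 : Integrable (fun p : ℝ × ℝ => γ p.1 * qF p.1 * (1:ℝ) - γ p.1 * qF p.2)
        (ν.prod ν) := i1.sub i2
      have i123 : Integrable
        (fun p : ℝ × ℝ => γ p.1 * qF p.1 * (1:ℝ) - γ p.1 * qF p.2 - qF p.1 * γ p.2)
        (ν.prod ν) := i12.sub i3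
      rw [show (fun p : ℝ × ℝ => (γ p.1 - γ p.2) * (qF p.1 - qF p.2)) =
          fun p : ℝ × ℝ => (γ p.1 * qF p.1) * (1:ℝ) - γ p.1 * qF p.2 - qF p.1 * γ p.2
            + (1:ℝ) * (γ p.2 * qF p.2) from funext fun p => by ring]
      rw [integral_add i123 i4, integral_sub i12 i3, integral_sub i1 i2,
        integral_prod_mul (fun u => γ u * qF u) (fun _ => (1:ℝ)),
        integral_prod_mul (fun u => γ u) (fun u => qF u),
        integral_prod_mul (fun u => qF u) (fun u => γ u),
        integral_prod_mul (fun _ => (1:ℝ)) (fun u => γ u * qF u), hone]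
      have e1 : ∫ u, γ u ∂ν = 1 := hγ1
      have e2 : ∫ u, qF u ∂ν = μF := hqFm
      rw [e1, e2]
      ring
    rw [exp] at key
    linarith
  have hρ0 : 0 ≤ ρ := by
    rw [hX] at hcheb
    by_contra h
    push_neg at h
    nlinarith only [hcheb, hσ0σF, h]
  have hρsq : ρ ^ 2 < 1 := by nlinarith only [hρ0, hρ1]
  have hB2pos : 0 < σ0 ^ 2 * (1 - ρ ^ 2) :=
    mul_pos (pow_pos hσ0pos 2) (by linarith only [hρsq])
  -- σ_δ facts
  have hD2 : ∀ δ : ℝ, (sigD σ0 σF ρ δ) ^ 2 = σ0 ^ 2 + 4 * δ ^ 2 * σF ^ 2 + 4 * δ * σ0 * σF * ρ :=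
    fun δ => Real.sq_sqrt (by nlinarith only [sq_nonneg (σ0 * ρ + 2 * δ * σF), hB2pos])
  have hDpos : ∀ δ : ℝ, 0 < sigD σ0 σF ρ δ :=
    fun δ => Real.sqrt_pos.mpr (by nlinarith only [sq_nonneg (σ0 * ρ + 2 * δ * σF), hB2pos])
  have hD2' : ∀ δ : ℝ, (sigD σ0 σF ρ δ) ^ 2 = (σ0 * ρ + 2 * δ * σF) ^ 2 + σ0 ^ 2 * (1 - ρ ^ 2) :=
    fun δ => by rw [hD2 δ]; ring
  -- linear and quadratic integral computations
  have hLint : ∀ a b c : ℝ, IntegrableOn (fun u => a + b * γ u + c * qF u)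
      (Ioo (0:ℝ) 1) volume := fun a b c =>
    ((integrable_const a).add (hγi.const_mul b)).add (hqFi.const_mul c)
  have hL : ∀ a b c : ℝ, (∫ u in Ioo (0:ℝ) 1, (a + b * γ u + c * qF u)) = a + b + c * μF := by
    intro a b c
    have j1 : IntegrableOn (fun u => a + b * γ u) (Ioo (0:ℝ) 1) volume :=
      (integrable_const a).add (hγi.const_mul b)
    rw [integral_add j1 (hqFi.const_mul c),
      integral_add (integrable_const a) (hγi.const_mul b),
      integral_const_mul, integral_const_mul, hconst a, hγ1, hqFm]
    ring
  have hQint : ∀ a b c : ℝ, IntegrableOn (fun u => (a + b * γ u + c * qF u) ^ 2)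
      (Ioo (0:ℝ) 1) volume := by
    intro a b c
    have e : (fun u => (a + b * γ u + c * qF u) ^ 2) = fun u =>
        a ^ 2 + (2 * a * b) * γ u + (2 * a * c) * qF u + b ^ 2 * (γ u ^ 2) + c ^ 2 * (qF u ^ 2)
          + (2 * b * c) * (γ u * qF u) := funext fun u => by ring
    rw [e]
    exact (((((integrable_const (a ^ 2)).add (hγi.const_mul _)).add (hqFi.const_mul _)).add
      (hγi2.const_mul _)).add (hqFi2.const_mul _)).add (int_γq.const_mul _)
  have hQ : ∀ a b c : ℝ, (∫ u in Ioo (0:ℝ) 1, (a + b * γ u + c * qF u) ^ 2)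
      = a ^ 2 + b ^ 2 * (1 + σ0 ^ 2) + c ^ 2 * (μF ^ 2 + σF ^ 2) + 2 * a * b + 2 * a * c * μF
        + 2 * b * c * (μF + σ0 * σF * ρ) := by
    intro a b c
    have e : (fun u => (a + b * γ u + c * qF u) ^ 2) = fun u =>
        a ^ 2 + (2 * a * b) * γ u + (2 * a * c) * qF u + b ^ 2 * (γ u ^ 2) + c ^ 2 * (qF u ^ 2)
          + (2 * b * c) * (γ u * qF u) := funext fun u => by ring
    rw [e]
    have i1 : IntegrableOn (fun u => a ^ 2 + (2 * a * b) * γ u) (Ioo (0:ℝ) 1) volume :=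
      (integrable_const _).add (hγi.const_mul _)
    have i2 : IntegrableOn (fun u => a ^ 2 + (2 * a * b) * γ u + (2 * a * c) * qF u)
        (Ioo (0:ℝ) 1) volume := i1.add (hqFi.const_mul _)
    have i3 : IntegrableOn (fun u => a ^ 2 + (2 * a * b) * γ u + (2 * a * c) * qF u
        + b ^ 2 * (γ u ^ 2)) (Ioo (0:ℝ) 1) volume := i2.add (hγi2.const_mul _)
    have i4 : IntegrableOn (fun u => a ^ 2 + (2 * a * b) * γ u + (2 * a * c) * qF u
        + b ^ 2 * (γ u ^ 2) + c ^ 2 * (qF u ^ 2)) (Ioo (0:ℝ) 1) volume := i3.add (hqFi2.const_mul _)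
    rw [integral_add i4 (int_γq.const_mul _), integral_add i3 (hqFi2.const_mul _),
      integral_add i2 (hγi2.const_mul _), integral_add i1 (hqFi.const_mul _),
      integral_add (integrable_const _) (hγi.const_mul _),
      integral_const_mul, integral_const_mul, integral_const_mul, integral_const_mul,
      integral_const_mul, hconst, hγ1, hqFm, hσ0sq, hqF2, hX]
    ring
  -- membership in M(μ,σ) for δ > 0
  have hform : ∀ δ : ℝ, qD μ σ μF σ0 σF ρ δ γ qF = fun u =>
      (μ - σ / sigD σ0 σF ρ δ * (1 + 2 * δ * μF)) + (σ / sigD σ0 σF ρ δ) * γ u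
        + (2 * δ * (σ / sigD σ0 σF ρ δ)) * qF u := by
    intro δ
    funext u
    simp only [qD]
    ring
  have hmem : ∀ δ : ℝ, 0 < δ → MemM μ σ (qD μ σ μF σ0 σF ρ δ γ qF) := by
    intro δ hδ
    have hD := hDpos δ
    have ht : 0 < σ / sigD σ0 σF ρ δ := div_pos hσpos hD
    have htD : (σ / sigD σ0 σF ρ δ) * sigD σ0 σF ρ δ = σ := by field_simp
    refine ⟨⟨?_, ?_, ?_⟩, ?_, ?_⟩
    · intro u hu v hv huv
      simp only [qD]
      have h1 := hγmono hu hv huv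
      have h2 := hqFmono hu hv huv
      have key : γ u + 2 * δ * qF u ≤ γ v + 2 * δ * qF v := by nlinarith only [h1, h2, hδ]
      linarith only [mul_le_mul_of_nonneg_left key ht.le]
    · rw [hform δ]; exact hLint _ _ _
    · rw [hform δ]; exact hQint _ _ _
    · rw [hform δ]; simp only [intI]; rw [hL]; ring
    · rw [hform δ]; simp only [intI]; rw [hQ]
      linear_combination (-(σ / sigD σ0 σF ρ δ) ^ 2) * hD2 δ +
        ((σ / sigD σ0 σF ρ δ) * sigD σ0 σF ρ δ + σ) * htD
  -- closed form of the Wasserstein distance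
  have hW : ∀ δ : ℝ, W2 qF (qD μ σ μF σ0 σF ρ δ γ qF) =
      εmin + 2 * σ * σF - 2 * σF * (σ0 * ρ + 2 * δ * σF) * (σ / sigD σ0 σF ρ δ) := by
    intro δ
    have hD := hDpos δ
    have htD : (σ / sigD σ0 σF ρ δ) * sigD σ0 σF ρ δ = σ := by field_simp
    have e : (fun u => (qF u - qD μ σ μF σ0 σF ρ δ γ qF u) ^ 2) = fun u =>
        ((σ / sigD σ0 σF ρ δ * (1 + 2 * δ * μF) - μ) + (-(σ / sigD σ0 σF ρ δ)) * γ u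
          + (1 - 2 * δ * (σ / sigD σ0 σF ρ δ)) * qF u) ^ 2 := by
      funext u
      simp only [qD]
      ring
    simp only [W2, intI]
    rw [e, hQ]
    linear_combination (-(σ / sigD σ0 σF ρ δ) ^ 2) * hD2 δ +
      ((σ / sigD σ0 σF ρ δ) * sigD σ0 σF ρ δ + σ) * htD - hεmin
  -- the scalar analysis
  have hσσF : (0:ℝ) < σ * σF := mul_pos hσpos hσFpos
  set N : ℝ := εmin + 2 * σ * σF - ε with hNdef
  have hN1 : N < 2 * σ * σF := by rw [hNdef]; linarith
  have hε2' : ε < εmin + 2 * σ * σF * (1 - ρ) := by rw [← hεmax]; exact hε2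
  have hNρ : 2 * σ * σF * ρ < N := by rw [hNdef]; linarith only [hε2']
  have hNpos : 0 < N := by linarith only [hNρ, mul_nonneg hσσF.le hρ0]
  have hprodpos : 0 < (εmin + 4 * σ * σF - ε) * (ε - εmin) := by
    apply mul_pos
    · linarith only [hε2', hσσF, mul_nonneg hσσF.le hρ0]
    · linarith
  set S : ℝ := Real.sqrt ((εmin + 4 * σ * σF - ε) * (ε - εmin)) with hSdef
  have hSpos : 0 < S := Real.sqrt_pos.mpr hprodpos
  have hS2 : S ^ 2 = 4 * σ ^ 2 * σF ^ 2 - N ^ 2 := by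
    rw [hSdef, Real.sq_sqrt hprodpos.le, hNdef]
    ring
  set v : ℝ := Real.sqrt (1 - ρ ^ 2) with hvdef
  have hvpos : 0 < v := Real.sqrt_pos.mpr (by linarith only [hρsq])
  have hv2 : v ^ 2 = 1 - ρ ^ 2 := Real.sq_sqrt (by linarith only [hρsq])
  have hA : σ0 * ρ + 2 * δs * σF = σ0 * v * N / S := by
    rw [hδs]
    field_simp
    ring
  have hvNρS : ρ * S < v * N := by
    have h2 : 0 < v * N := mul_pos hvpos hNpos
    have h3 : (ρ * S) ^ 2 < (v * N) ^ 2 := by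
      nlinarith only [hNρ, mul_nonneg hσσF.le hρ0, hv2, hS2]
    exact lt_of_pow_lt_pow_left₀ 2 h2.le h3
  have hδspos : 0 < δs := by
    have h1 : σ0 * ρ < σ0 * v * N / S := by
      rw [lt_div_iff₀ hSpos]
      nlinarith only [hvNρS, hσ0pos]
    have h7 : 0 < 2 * δs * σF := by linarith only [hA, h1]
    by_contra hc
    push_neg at hc
    nlinarith only [h7, hσFpos, hc]
  have hDδs : sigD σ0 σF ρ δs = 2 * σ * σF * σ0 * v / S := by
    have h2 : (sigD σ0 σF ρ δs) ^ 2 = (2 * σ * σF * σ0 * v / S) ^ 2 := by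
      rw [hD2' δs, hA]
      have hS0 : S ^ 2 ≠ 0 := pow_ne_zero 2 hSpos.ne'
      rw [div_pow, div_pow, eq_div_iff hS0]
      have hcan : (σ0 * v * N) ^ 2 / S ^ 2 * S ^ 2 = (σ0 * v * N) ^ 2 := div_mul_cancel₀ _ hS0
      linear_combination hcan + (-(σ0 ^ 2 * S ^ 2)) * hv2 + (σ0 ^ 2 * v ^ 2) * hS2
    have hrpos : 0 < 2 * σ * σF * σ0 * v / S := by positivity
    rw [← Real.sqrt_sq (hDpos δs).le, h2, Real.sqrt_sq hrpos.le]
  have heqs : 2 * σ * σF * (σ0 * ρ + 2 * δs * σF) = N * sigD σ0 σF ρ δs := by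
    rw [hA, hDδs]
    field_simp [hSpos.ne']
  have hW2δs : W2 qF (qD μ σ μF σ0 σF ρ δs γ qF) = ε := by
    rw [hW δs]
    have hD := hDpos δs
    have h3 : 2 * σF * (σ0 * ρ + 2 * δs * σF) * (σ / sigD σ0 σF ρ δs) = N := by
      rw [eq_comm, ← sub_eq_zero]
      field_simp
      linear_combination -heqs
    rw [h3, hNdef]
    ring
  have huniq : ∀ δ : ℝ, 0 < δ → W2 qF (qD μ σ μF σ0 σF ρ δ γ qF) = ε → δ = δs := by
    intro δ hδ hWδ
    rw [hW δ] at hWδ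
    have hD := hDpos δ
    have h3 : 2 * σF * (σ0 * ρ + 2 * δ * σF) * (σ / sigD σ0 σF ρ δ) = N := by
      rw [hNdef]; linarith
    have heq : 2 * σ * σF * (σ0 * ρ + 2 * δ * σF) = N * sigD σ0 σF ρ δ := by
      field_simp at h3
      linear_combination h3
    have hApos : 0 < σ0 * ρ + 2 * δ * σF := by
      nlinarith only [mul_pos hNpos hD, hσσF, heq]
    have hAspos : 0 < σ0 * ρ + 2 * δs * σF := by
      nlinarith only [mul_pos hNpos (hDpos δs), hσσF, heqs]
    have hsq : (σ0 * ρ + 2 * δ * σF) ^ 2 * (4 * σ ^ 2 * σF ^ 2 - N ^ 2)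
        = N ^ 2 * (σ0 ^ 2 * (1 - ρ ^ 2)) := by
      linear_combination (2 * σ * σF * (σ0 * ρ + 2 * δ * σF) + N * sigD σ0 σF ρ δ) * heq +
        N ^ 2 * hD2' δ
    have hsqs : (σ0 * ρ + 2 * δs * σF) ^ 2 * (4 * σ ^ 2 * σF ^ 2 - N ^ 2)
        = N ^ 2 * (σ0 ^ 2 * (1 - ρ ^ 2)) := by
      linear_combination (2 * σ * σF * (σ0 * ρ + 2 * δs * σF) + N * sigD σ0 σF ρ δs) * heqs +
        N ^ 2 * hD2' δs
    have hfacpos : (0:ℝ) < 4 * σ ^ 2 * σF ^ 2 - N ^ 2 := by nlinarith only [hN1, hNpos, hσσF]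
    have hAA : (σ0 * ρ + 2 * δ * σF) ^ 2 = (σ0 * ρ + 2 * δs * σF) ^ 2 :=
      mul_right_cancel₀ hfacpos.ne' (hsq.trans hsqs.symm)
    have hAeq : σ0 * ρ + 2 * δ * σF = σ0 * ρ + 2 * δs * σF := by
      rw [← Real.sqrt_sq hApos.le, hAA, Real.sqrt_sq hAspos.le]
    have h6 : (2 * δ) * σF = (2 * δs) * σF := by linarith
    have := mul_right_cancel₀ hσFpos.ne' h6
    linarith
  exact ⟨hδspos, hmem δs hδspos, hW2δs, huniq⟩
end
end
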